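/- Let (X_p)_p, indexed by the primes, be independent random variables on a probability space (Ω, P), each distributed according to the probability Haar measure on SU₂(ℂ). For ν ≥ 0 let U_ν be the polynomial determined by U_ν(2cos θ) = sin((ν+1)θ)/sin θ, and for n ≥ 1 set Y_n = ∏_{p^ν ∥ n} U_ν(Tr X_p). Then for all squarefree positive integers n and m one has E(Y_n Y_m) = 1 if n = m and E(Y_n Y_m) = 0 if n ≠ m. -/

import Mathlib

open MeasureTheory ProbabilityTheory Filter

noncomputable section

/-- `SU₂(ℂ)`: the group of 2×2 complex unitary matrices of determinant 1. -/
abbrev SU2 := Matrix.specialUnitaryGroup (Fin 2) ℂ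

noncomputable instance : MeasurableSpace SU2 := borel SU2

instance : BorelSpace SU2 := ⟨rfl⟩

instance : Group SU2 :=
  { (inferInstance : Monoid SU2) with
    inv := fun A => ⟨star (A : Matrix (Fin 2) (Fin 2) ℂ), by
      obtain ⟨h1, h2⟩ := Matrix.mem_specialUnitaryGroup_iff.mp A.2
      refine Matrix.mem_specialUnitaryGroup_iff.mpr ⟨Unitary.star_mem h1, ?_⟩
      show Matrix.det (star (A : Matrix (Fin 2) (Fin 2) ℂ)) = 1
      rw [Matrix.star_eq_conjTranspose, Matrix.det_conjTranspose, h2, star_one]⟩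
    inv_mul_cancel := fun A => Subtype.ext (Unitary.star_mul_self_of_mem A.2.1) }

/-- The (real) trace of an element of `SU₂(ℂ)`; the trace of a unitary matrix with
determinant 1 is real, and we take its real part. -/
def rtr (x : SU2) : ℝ := (Matrix.trace (x : Matrix (Fin 2) (Fin 2) ℂ)).re

/-- The polynomial `U_ν` determined by `U_ν(2 cos θ) = sin((ν+1)θ)/sin θ`
(a rescaled Chebyshev polynomial of the second kind). -/
def chebU (ν : ℕ) (x : ℝ) : ℝ := (Polynomial.Chebyshev.U ℝ (ν : ℤ)).eval (x / 2)

/-- `Yn x n = ∏_{p^ν ∥ n} U_ν(Tr x_p)`, the product being over the prime powers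
exactly dividing `n`. -/
def Yn (x : ℕ → SU2) (n : ℕ) : ℝ :=
  ∏ p ∈ n.primeFactors, chebU (n.factorization p) (rtr (x p))

/-!
For squarefree `n` we have `U₁(t) = t`, so `Y_n` is the product of the traces `Tr X_p` over
`p ∣ n`. These are independent, centred and of unit variance: translating by `-1 ∈ SU₂` negates
the trace, so `E Tr = 0`. For the variance, `Tr x = 2 Re x₀₀`; left translation by `diag(i, -i)`
shows that `Re x₀₀` and `Im x₀₀` have the same second moment, and left translation by
`!![0, 1; -1, 0]` that `|x₀₀|²` and `|x₁₀|²` have the same mean, which is `1/2` because the first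
column of `x` is a unit vector. Hence `E(Y_n Y_m)` factors over `p ∣ nm` into factors `E Tr² = 1`
and `E Tr = 0`, the latter occurring iff `n ≠ m`.
-/

namespace SU2

def mk (a b : ℂ) (h : Complex.normSq a + Complex.normSq b = 1) : SU2 :=
  ⟨!![a, b; -starRingEnd ℂ b, starRingEnd ℂ a], by
    have h' : a * starRingEnd ℂ a + b * starRingEnd ℂ b = 1 := by
      simp only [Complex.mul_conj, ← Complex.ofReal_add, h, Complex.ofReal_one]
    refine Matrix.mem_specialUnitaryGroup_iff.mpr ⟨Matrix.mem_unitaryGroup_iff.mpr ?_, ?_⟩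
    · ext i j
      fin_cases i <;> fin_cases j <;>
        simp [Matrix.mul_apply, Fin.sum_univ_two, Matrix.star_apply, h', add_comm, mul_comm]
    · simp [Matrix.det_fin_two_of, h']⟩

lemma coe_mk {a b : ℂ} (h : Complex.normSq a + Complex.normSq b = 1) :
    (mk a b h).1 = !![a, b; -starRingEnd ℂ b, starRingEnd ℂ a] :=
  rfl

lemma mk_mul_apply_zero_zero {a b : ℂ} (h : Complex.normSq a + Complex.normSq b = 1) (x : SU2) :
    (mk a b h * x).1 0 0 = a * x.1 0 0 + b * x.1 1 0 := by
  simp [coe_mk, Matrix.mul_apply, Fin.sum_univ_two]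

lemma apply_one_one (x : SU2) : x.1 1 1 = starRingEnd ℂ (x.1 0 0) := by
  have hstar : star x.1 = x.1⁻¹ :=
    (Matrix.inv_eq_right_inv (Matrix.mem_unitaryGroup_iff.mp x.2.1)).symm
  have hadj : Matrix.adjugate x.1 = x.1⁻¹ :=
    (Matrix.inv_eq_right_inv (by
      rw [Matrix.mul_adjugate, (Matrix.mem_specialUnitaryGroup_iff.mp x.2).2, one_smul])).symm
  have := congrFun (congrFun (hstar.trans hadj.symm) 0) 0
  simp [Matrix.adjugate_fin_two] at this
  simp [← this]

lemma normSq_add_normSq (x : SU2) : Complex.normSq (x.1 0 0) + Complex.normSq (x.1 1 0) = 1 := by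
  have := congrArg Complex.re (congrFun (congrFun (Matrix.mem_unitaryGroup_iff'.mp x.2.1) 0) 0)
  simpa [Matrix.mul_apply, Fin.sum_univ_two, Complex.normSq_apply] using this

lemma rtr_eq (x : SU2) : rtr x = 2 * (x.1 0 0).re := by
  rw [rtr, Matrix.trace_fin_two, Complex.add_re, apply_one_one, Complex.conj_re]
  ring

lemma integrable_comp_apply {μ : Measure SU2} [IsFiniteMeasure μ] {f : ℂ → ℝ} (hf : Continuous f)
    (i j : Fin 2) : Integrable (fun x : SU2 => f (x.1 i j)) μ := by
  obtain ⟨C, hC⟩ := (isCompact_closedBall (0 : ℂ) 1).exists_bound_of_continuousOn hf.continuousOn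
  refine .of_bound (hf.comp (continuous_subtype_val.matrix_elem i j)).aestronglyMeasurable
    C (ae_of_all _ fun x => hC _ ?_)
  simpa using entry_norm_bound_of_unitary x.2.1 i j

variable {μ : Measure SU2} [μ.IsMulLeftInvariant]

lemma integral_rtr : ∫ x, rtr x ∂μ = 0 :=
  integral_eq_zero_of_mul_left_eq_neg (g := mk (-1) 0 (by simp)) fun x => by
    simp [rtr_eq, mk_mul_apply_zero_zero]

variable [IsProbabilityMeasure μ]

lemma integral_normSq_apply_zero_zero : ∫ x, Complex.normSq (x.1 0 0) ∂μ = 1 / 2 := by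
  have hswap : ∫ x, Complex.normSq (x.1 1 0) ∂μ = ∫ x, Complex.normSq (x.1 0 0) ∂μ := by
    rw [← integral_mul_left_eq_self (fun x : SU2 => Complex.normSq (x.1 0 0)) (mk 0 1 (by simp))]
    simp only [mk_mul_apply_zero_zero, zero_mul, one_mul, zero_add]
  have hsum : ∫ x, (Complex.normSq (x.1 0 0) + Complex.normSq (x.1 1 0)) ∂μ = 1 := by
    simp [normSq_add_normSq]
  rw [integral_add (integrable_comp_apply Complex.continuous_normSq 0 0)
    (integrable_comp_apply Complex.continuous_normSq 1 0), hswap] at hsum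
  linarith

lemma integral_rtr_sq : ∫ x, rtr x ^ 2 ∂μ = 1 := by
  have hrot : ∫ x, (x.1 0 0).im ^ 2 ∂μ = ∫ x, (x.1 0 0).re ^ 2 ∂μ := by
    rw [← integral_mul_left_eq_self (fun x : SU2 => (x.1 0 0).re ^ 2) (mk Complex.I 0 (by simp))]
    simp [mk_mul_apply_zero_zero]
  have hsplit : ∫ x, Complex.normSq (x.1 0 0) ∂μ
      = ∫ x, (x.1 0 0).re ^ 2 ∂μ + ∫ x, (x.1 0 0).im ^ 2 ∂μ := by
    simp_rw [Complex.normSq_apply, ← sq]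
    exact integral_add (integrable_comp_apply (f := fun z => z.re ^ 2) (by fun_prop) 0 0)
      (integrable_comp_apply (f := fun z => z.im ^ 2) (by fun_prop) 0 0)
  rw [integral_normSq_apply_zero_zero, hrot] at hsplit
  simp_rw [rtr_eq, mul_pow, integral_const_mul]
  linarith

end SU2

section Independence

variable {Ω ι : Type*} [MeasurableSpace Ω] {P : Measure Ω} {Z : ι → Ω → ℝ}

lemma ProbabilityTheory.iIndepFun.integral_finset_prod (hZ : iIndepFun Z P)
    (hmeas : ∀ i, AEStronglyMeasurable (Z i) P) (s : Finset ι) :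
    ∫ ω, ∏ i ∈ s, Z i ω ∂P = ∏ i ∈ s, ∫ ω, Z i ω ∂P := by
  simp_rw [← Finset.prod_coe_sort s]
  exact (hZ.precomp Subtype.val_injective (g := ((↑) : s → ι))).integral_fun_prod_eq_prod_integral
    fun i => hmeas i

theorem ProbabilityTheory.iIndepFun.integral_prod_mul_prod_eq_ite [DecidableEq ι]
    (hZ : iIndepFun Z P) (hmeas : ∀ i, Measurable (Z i)) (hmean : ∀ i, ∫ ω, Z i ω ∂P = 0)
    (hvar : ∀ i, ∫ ω, Z i ω ^ 2 ∂P = 1) (A B : Finset ι) :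
    ∫ ω, (∏ i ∈ A, Z i ω) * ∏ i ∈ B, Z i ω ∂P = if A = B then 1 else 0 := by
  have hP := hZ.isProbabilityMeasure
  set k : ι → ℕ := fun i => (if i ∈ A then 1 else 0) + if i ∈ B then 1 else 0
  have hprod : ∀ ω, (∏ i ∈ A, Z i ω) * ∏ i ∈ B, Z i ω = ∏ i ∈ A ∪ B, Z i ω ^ k i := by
    intro ω
    simp only [k, pow_add, Finset.prod_mul_distrib, pow_ite, pow_one, pow_zero,
      Finset.prod_ite_mem, Finset.union_inter_cancel_left, Finset.union_inter_cancel_right]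
  have hmoment : ∀ i, ∫ ω, Z i ω ^ k i ∂P = if k i = 1 then 0 else 1 := by
    intro i
    have : k i ≤ 2 := by simp only [k]; split_ifs <;> norm_num
    interval_cases h : k i <;> simp [hmean, hvar]
  have hpow : iIndepFun (fun i ω => Z i ω ^ k i) P :=
    hZ.comp (fun i x => x ^ k i) fun i => by fun_prop
  simp_rw [hprod, hpow.integral_finset_prod fun i => ((hmeas i).pow_const _).aestronglyMeasurable,
    hmoment]
  split_ifs with hAB
  · subst hAB
    exact Finset.prod_eq_one fun i hi => by simp_all [k]
  · obtain ⟨i, hi⟩ : ∃ i, ¬(i ∈ A ↔ i ∈ B) := by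
      by_contra! h; exact hAB (Finset.ext h)
    exact Finset.prod_eq_zero (i := i) (by simp; tauto) (by simp only [k]; split_ifs <;> simp_all)

end Independence

lemma continuous_rtr : Continuous rtr :=
  Complex.continuous_re.comp continuous_subtype_val.matrix_trace

lemma chebU_one (t : ℝ) : chebU 1 t = t := by
  simp [chebU, Polynomial.Chebyshev.U_one]
  ring

def Nat.Primes.primeFactors (n : ℕ) : Finset Nat.Primes := n.primeFactors.subtype Nat.Prime

lemma Nat.Primes.prod_primeFactors {M : Type*} [CommMonoid M] (n : ℕ) (f : ℕ → M) :
    ∏ p ∈ Nat.Primes.primeFactors n, f p = ∏ p ∈ n.primeFactors, f p :=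
  Finset.prod_subtype_of_mem f fun _ => Nat.prime_of_mem_primeFactors

lemma Nat.Primes.primeFactors_inj_of_squarefree {n m : ℕ} (hn : Squarefree n)
    (hm : Squarefree m) : Nat.Primes.primeFactors n = Nat.Primes.primeFactors m ↔ n = m := by
  refine ⟨fun h => ?_, by rintro rfl; rfl⟩
  have hmap (k : ℕ) : (Nat.Primes.primeFactors k).map (Function.Embedding.subtype _) =
      k.primeFactors :=
    Finset.subtype_map_of_mem fun _ => Nat.prime_of_mem_primeFactors
  rw [← Nat.prod_primeFactors_of_squarefree hn, ← Nat.prod_primeFactors_of_squarefree hm,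
    ← hmap n, ← hmap m, h]

lemma Yn_of_squarefree (x : ℕ → SU2) {n : ℕ} (hn : Squarefree n) :
    Yn x n = ∏ p ∈ Nat.Primes.primeFactors n, rtr (x p) := by
  rw [Nat.Primes.prod_primeFactors n fun p => rtr (x p), Yn]
  refine Finset.prod_congr rfl fun p hp => ?_
  rw [Nat.factorization_eq_one_of_squarefree hn (Nat.prime_of_mem_primeFactors hp)
    (Nat.dvd_of_mem_primeFactors hp), chebU_one]

theorem statement7_general
    {Ω : Type*} [MeasurableSpace Ω] (P : Measure Ω)
    (X : ℕ → Ω → SU2) (hXm : ∀ p, Measurable (X p))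
    (hindep : iIndepFun (fun p : Nat.Primes => X p) P)
    (μ : Measure SU2) (hHaar : μ.IsHaarMeasure) (hμprob : IsProbabilityMeasure μ)
    (hdist : ∀ p : ℕ, p.Prime → Measure.map (X p) P = μ)
    (n m : ℕ) (hn : Squarefree n) (hm : Squarefree m) :
    ∫ ω, Yn (fun p => X p ω) n * Yn (fun p => X p ω) m ∂P = if n = m then 1 else 0 := by
  have hlaw (q : Nat.Primes) (f : SU2 → ℝ) (hf : Continuous f) :
      ∫ ω, f (X q ω) ∂P = ∫ x, f x ∂μ := by
    rw [← hdist q q.2, integral_map (hXm q).aemeasurable hf.aestronglyMeasurable]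
  have hZ : iIndepFun (fun (q : Nat.Primes) ω => rtr (X q ω)) P :=
    hindep.comp (fun _ => rtr) fun _ => continuous_rtr.measurable
  simp_rw [Yn_of_squarefree _ hn, Yn_of_squarefree _ hm]
  rw [hZ.integral_prod_mul_prod_eq_ite (fun q => continuous_rtr.measurable.comp (hXm q))
    (fun q => (hlaw q _ continuous_rtr).trans SU2.integral_rtr)
    (fun q => (hlaw q _ (continuous_rtr.pow 2)).trans SU2.integral_rtr_sq)]
  simp only [Nat.Primes.primeFactors_inj_of_squarefree hn hm]

/-- Orthonormality: for squarefree `n`, `m`, `E(Y_n Y_m) = 1` if `n = m` and `0` otherwise. -/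
theorem statement7
    {Ω : Type*} [MeasurableSpace Ω] (P : Measure Ω) [IsProbabilityMeasure P]
    (X : ℕ → Ω → SU2) (hXm : ∀ p, Measurable (X p))
    (hindep : iIndepFun (fun p : Nat.Primes => X p) P)
    (μ : Measure SU2) (hHaar : μ.IsHaarMeasure) (hμprob : IsProbabilityMeasure μ)
    (hdist : ∀ p : ℕ, p.Prime → Measure.map (X p) P = μ)
    (n m : ℕ) (hn : Squarefree n) (hm : Squarefree m) :
    ∫ ω, Yn (fun p => X p ω) n * Yn (fun p => X p ω) m ∂P = if n = m then 1 else 0 :=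
  statement7_general P X hXm hindep μ hHaar hμprob hdist n m hn hm
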